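/- Let n > 2k and γ > 0, and let φ_0 = k(n−k) be the largest eigenvalue of the adjacency matrix A of J(n,k). Then there is no nonzero vector v ∈ H_inv with Hv = (−γφ_0)·v; that is, −γφ_0 is not an eigenvalue of H restricted to H_inv. -/

import Mathlib

open Matrix

/-- Vertices of the Johnson graph `J(n,k)`: the `k`-element subsets of `{1,…,n}`. -/
abbrev JV (n k : ℕ) := {s : Finset (Fin n) // s.card = k}

/-- The Johnson graph `J(n,k)`. -/
def JohnsonGraph (n k : ℕ) : SimpleGraph (JV n k) where
  Adj v w := (v.1 ∩ w.1).card = k - 1 ∧ v ≠ w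
  symm := by
    refine ⟨fun v w h => ?_⟩
    exact ⟨by rw [Finset.inter_comm]; exact h.1, h.2.symm⟩
  loopless := by refine ⟨fun v h => ?_⟩; exact h.2 rfl

instance (n k : ℕ) : DecidableRel (JohnsonGraph n k).Adj :=
  fun _ _ => instDecidableAnd

/-- The (real) adjacency matrix of the Johnson graph `J(n,k)`. -/
noncomputable def JA (n k : ℕ) : Matrix (JV n k) (JV n k) ℝ :=
  (JohnsonGraph n k).adjMatrix ℝ

/-- The search Hamiltonian `H = -γ•A - e_{w1} e_{w1}ᵀ - e_{w2} e_{w2}ᵀ` on `J(n,k)`. -/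
noncomputable def JH (n k : ℕ) (w1 w2 : JV n k) (γ : ℝ) : Matrix (JV n k) (JV n k) ℝ :=
  (-γ) • JA n k - Matrix.vecMulVec (Pi.single w1 1) (Pi.single w1 1)
    - Matrix.vecMulVec (Pi.single w2 1) (Pi.single w2 1)

/-- `μ` is a (real) eigenvalue of the matrix `M`. -/
def IsEig {V : Type*} [Fintype V] (M : Matrix V V ℝ) (μ : ℝ) : Prop :=
  ∃ x, x ≠ 0 ∧ M.mulVec x = μ • x

/-- The action of a permutation of `{1,…,n}` on `k`-subsets. -/
def permAct {n k : ℕ} (g : Equiv.Perm (Fin n)) (v : JV n k) : JV n k :=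
  ⟨v.1.image ⇑g, by rw [Finset.card_image_of_injective _ g.injective]; exact v.2⟩

/-- `g` fixes the set `{w1, w2}` of marked vertices setwise. -/
def fixesW {n k : ℕ} (w1 w2 : JV n k) (g : Equiv.Perm (Fin n)) : Prop :=
  ({permAct g w1, permAct g w2} : Finset (JV n k)) = {w1, w2}

/-- The subspace `H_inv` of vectors invariant under the group `𝔊` of permutations
fixing `{w1, w2}` setwise. -/
def Hinv {n k : ℕ} (w1 w2 : JV n k) : Set (JV n k → ℝ) :=
  {x | ∀ g : Equiv.Perm (Fin n), fixesW w1 w2 g → ∀ v, x (permAct g v) = x v}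

-- adjacency of u and insert b (erase a)
lemma johnson_adj_insert {n k : ℕ} (u : JV n k) {a b : Fin n} (ha : a ∈ u.1) (hb : b ∉ u.1) :
    (JohnsonGraph n k).Adj u ⟨insert b (u.1.erase a), by
      rw [Finset.card_insert_of_notMem (fun h => hb (Finset.mem_of_mem_erase h)),
        Finset.card_erase_of_mem ha, u.2]
      have : 0 < k := u.2 ▸ Finset.card_pos.2 ⟨a, ha⟩
      omega⟩ := by
  constructor
  · have h1 : u.1 ∩ insert b (u.1.erase a) = u.1.erase a := by
      rw [Finset.inter_comm, Finset.insert_inter_of_notMem hb, Finset.inter_comm,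
        Finset.inter_eq_right.2 (Finset.erase_subset a u.1)]
    rw [h1, Finset.card_erase_of_mem ha, u.2]
  · intro h
    apply hb
    have := congrArg Subtype.val h
    simp only at this
    rw [this]
    exact Finset.mem_insert_self b _

lemma johnson_degree {n k : ℕ} (u : JV n k) :
    ((JohnsonGraph n k).neighborFinset u).card = k * (n - k) := by
  have hcard : (u.1 ×ˢ u.1ᶜ).card = k * (n - k) := by
    rw [Finset.card_product, u.2, Finset.card_compl, u.2, Fintype.card_fin]
  rw [← hcard]
  symm
  apply Finset.card_bij (fun p hp => (⟨insert p.2 (u.1.erase p.1), by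
      have hp' := Finset.mem_product.1 hp
      have ha := hp'.1
      have hb := Finset.mem_compl.1 hp'.2
      rw [Finset.card_insert_of_notMem (fun h => hb (Finset.mem_of_mem_erase h)),
        Finset.card_erase_of_mem ha, u.2]
      have : 0 < k := u.2 ▸ Finset.card_pos.2 ⟨p.1, ha⟩
      omega⟩ : JV n k))
  · intro p hp
    have hp' := Finset.mem_product.1 hp
    rw [SimpleGraph.mem_neighborFinset]
    exact johnson_adj_insert u hp'.1 (Finset.mem_compl.1 hp'.2)
  · rintro ⟨a, b⟩ hp ⟨a', b'⟩ hp' heq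
    have hp1 := Finset.mem_product.1 hp
    have hp2 := Finset.mem_product.1 hp'
    have ha : a ∈ u.1 := hp1.1
    have hb : b ∉ u.1 := Finset.mem_compl.1 hp1.2
    have ha' : a' ∈ u.1 := hp2.1
    have hb' : b' ∉ u.1 := Finset.mem_compl.1 hp2.2
    have hset : insert b (u.1.erase a) = insert b' (u.1.erase a') := congrArg Subtype.val heq
    have hbb : b = b' := by
      have : b ∈ insert b' (u.1.erase a') := hset ▸ Finset.mem_insert_self b _
      rcases Finset.mem_insert.1 this with h | h
      · exact h
      · exact absurd (Finset.mem_of_mem_erase h) hb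
    have haa : a = a' := by
      by_contra hne
      have h1 : a ∈ insert b' (u.1.erase a') :=
        Finset.mem_insert.2 (Or.inr (Finset.mem_erase.2 ⟨hne, ha⟩))
      rw [← hset] at h1
      rcases Finset.mem_insert.1 h1 with h | h
      · exact hb (h ▸ ha)
      · exact (Finset.mem_erase.1 h).1 rfl
    exact Prod.ext haa hbb
  · intro w hw
    rw [SimpleGraph.mem_neighborFinset] at hw
    obtain ⟨hcard1, hne⟩ := hw
    have hsub : u.1 ∩ w.1 ⊆ u.1 := Finset.inter_subset_left
    have hk1 : 1 ≤ k := by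
      by_contra h
      push_neg at h
      interval_cases k
      apply hne
      ext1
      rw [Finset.card_eq_zero.1 u.2, Finset.card_eq_zero.1 w.2]
    have hA : (u.1 \ (u.1 ∩ w.1)).card = 1 := by
      rw [Finset.card_sdiff_of_subset hsub, u.2, hcard1]; omega
    have hB : (w.1 \ (u.1 ∩ w.1)).card = 1 := by
      rw [Finset.card_sdiff_of_subset (Finset.inter_subset_right), w.2, hcard1]; omega
    obtain ⟨a, ha⟩ := Finset.card_eq_one.1 hA
    obtain ⟨b, hb⟩ := Finset.card_eq_one.1 hB
    have hau : a ∈ u.1 := by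
      have : a ∈ u.1 \ (u.1 ∩ w.1) := ha ▸ Finset.mem_singleton_self a
      exact (Finset.mem_sdiff.1 this).1
    have hbw : b ∈ w.1 \ (u.1 ∩ w.1) := hb ▸ Finset.mem_singleton_self b
    have hbu : b ∉ u.1 := by
      intro h
      exact (Finset.mem_sdiff.1 hbw).2 (Finset.mem_inter.2 ⟨h, (Finset.mem_sdiff.1 hbw).1⟩)
    refine ⟨(a, b), Finset.mem_product.2 ⟨hau, Finset.mem_compl.2 hbu⟩, ?_⟩
    apply Subtype.ext
    show insert b (u.1.erase a) = w.1
    have herase : u.1.erase a = u.1 ∩ w.1 := by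
      rw [Finset.erase_eq, ← ha, Finset.sdiff_sdiff_self_left,
        Finset.inter_eq_right.2 hsub]
    rw [herase]
    apply Finset.eq_of_subset_of_card_le
    · intro x hx
      rcases Finset.mem_insert.1 hx with h | h
      · exact h ▸ (Finset.mem_sdiff.1 hbw).1
      · exact (Finset.mem_inter.1 h).2
    · rw [w.2, Finset.card_insert_of_notMem (fun h => (Finset.mem_sdiff.1 hbw).2 h), hcard1]
      omega

lemma johnson_reachable {n k : ℕ} (s t : JV n k) : (JohnsonGraph n k).Reachable s t := by
  obtain ⟨m, hm⟩ : ∃ m, (s.1 \ t.1).card = m := ⟨_, rfl⟩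
  induction m generalizing s with
  | zero =>
    have hsub : s.1 ⊆ t.1 := by
      intro x hx
      by_contra hxt
      exact absurd (Finset.card_eq_zero.1 hm ▸ Finset.mem_sdiff.2 ⟨hx, hxt⟩)
        (Finset.notMem_empty x)
    have : s = t := Subtype.ext (Finset.eq_of_subset_of_card_le hsub (by rw [s.2, t.2]))
    exact this ▸ SimpleGraph.Reachable.refl s
  | succ m ih =>
    have hcc : (t.1 \ s.1).card = m + 1 := by
      rw [Finset.card_sdiff_comm (by rw [s.2, t.2])] at hm
      exact hm
    obtain ⟨a, ha⟩ := Finset.card_pos.1 (by omega : 0 < (s.1 \ t.1).card)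
    obtain ⟨b, hb⟩ := Finset.card_pos.1 (by omega : 0 < (t.1 \ s.1).card)
    have has : a ∈ s.1 := (Finset.mem_sdiff.1 ha).1
    have hbs : b ∉ s.1 := (Finset.mem_sdiff.1 hb).2
    have hadj := johnson_adj_insert s has hbs
    set s' : JV n k := ⟨insert b (s.1.erase a), _⟩ with hs'
    have hcard : (s'.1 \ t.1).card = m := by
      have h1 : s'.1 \ t.1 = (s.1 \ t.1).erase a := by
        show insert b (s.1.erase a) \ t.1 = _
        rw [Finset.insert_sdiff_of_mem _ (Finset.mem_sdiff.1 hb).1, Finset.erase_eq,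
          Finset.erase_eq, sdiff_right_comm]
      rw [h1, Finset.card_erase_of_mem ha, hm]
      omega
    exact (SimpleGraph.Adj.reachable hadj).trans (ih s' hcard)

lemma exists_swap_perm {n k : ℕ} (w1 w2 : JV n k) :
    ∃ g : Equiv.Perm (Fin n), permAct g w1 = w2 ∧ permAct g w2 = w1 := by
  classical
  set A := w1.1 \ w2.1 with hA
  set B := w2.1 \ w1.1 with hB
  have hcardAB : A.card = B.card := Finset.card_sdiff_comm (by rw [w1.2, w2.2])
  have hAB : Disjoint A B := disjoint_sdiff_sdiff
  have e : {x // x ∈ A} ≃ {x // x ∈ B} := by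
    apply Fintype.equivOfCardEq
    rw [Fintype.card_coe, Fintype.card_coe, hcardAB]
  let f : Fin n → Fin n := fun x =>
    if hx : x ∈ A then (e ⟨x, hx⟩ : Fin n)
    else if hx : x ∈ B then (e.symm ⟨x, hx⟩ : Fin n) else x
  have hfA : ∀ x (hx : x ∈ A), f x = (e ⟨x, hx⟩ : Fin n) := by
    intro x hx; simp only [f, dif_pos hx]
  have hfB : ∀ x (hx : x ∈ B), f x = (e.symm ⟨x, hx⟩ : Fin n) := by
    intro x hx
    have hxA : x ∉ A := Finset.disjoint_right.1 hAB hx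
    simp only [f, dif_neg hxA, dif_pos hx]
  have hfO : ∀ x, x ∉ A → x ∉ B → f x = x := by
    intro x hx1 hx2; simp only [f, dif_neg hx1, dif_neg hx2]
  have hinv : Function.Involutive f := by
    intro x
    by_cases hx : x ∈ A
    · rw [hfA x hx, hfB _ (e ⟨x, hx⟩).2, Equiv.symm_apply_apply]
    · by_cases hx2 : x ∈ B
      · rw [hfB x hx2, hfA _ (e.symm ⟨x, hx2⟩).2, Equiv.apply_symm_apply]
      · rw [hfO x hx hx2, hfO x hx hx2]
  let g : Equiv.Perm (Fin n) := hinv.toPerm f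
  have hg : ⇑g = f := rfl
  have himg : ∀ (u v : JV n k),
      (∀ x ∈ u.1, f x ∈ v.1) → permAct g u = v := by
    intro u v hmap
    apply Subtype.ext
    show u.1.image ⇑g = v.1
    apply Finset.eq_of_subset_of_card_le
    · intro y hy
      obtain ⟨x, hx, hxy⟩ := Finset.mem_image.1 hy
      rw [hg] at hxy
      exact hxy ▸ hmap x hx
    · rw [v.2, Finset.card_image_of_injective _ g.injective, u.2]
  have hmap12 : ∀ x ∈ w1.1, f x ∈ w2.1 := by
    intro x hx
    by_cases hx2 : x ∈ w2.1
    · have hxA : x ∉ A := by rw [hA]; simp [hx2]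
      have hxB : x ∉ B := by rw [hB]; simp [hx]
      rw [hfO x hxA hxB]; exact hx2
    · have hxA : x ∈ A := Finset.mem_sdiff.2 ⟨hx, hx2⟩
      rw [hfA x hxA]
      exact (Finset.mem_sdiff.1 (e ⟨x, hxA⟩).2).1
  have hmap21 : ∀ x ∈ w2.1, f x ∈ w1.1 := by
    intro x hx
    by_cases hx1 : x ∈ w1.1
    · have hxA : x ∉ A := by rw [hA]; simp [hx]
      have hxB : x ∉ B := by rw [hB]; simp [hx1]
      rw [hfO x hxA hxB]; exact hx1
    · have hxB : x ∈ B := Finset.mem_sdiff.2 ⟨hx, hx1⟩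
      rw [hfB x hxB]
      exact (Finset.mem_sdiff.1 (e.symm ⟨x, hxB⟩).2).1
  exact ⟨g, himg w1 w2 hmap12, himg w2 w1 hmap21⟩

lemma vecMulVec_mulVec' {V : Type*} [Fintype V] (a b v : V → ℝ) :
    (Matrix.vecMulVec a b).mulVec v = fun u => a u * (b ⬝ᵥ v) := by
  funext u
  simp [Matrix.mulVec, Matrix.vecMulVec_apply, dotProduct, Finset.mul_sum, mul_assoc]

theorem stmt10 (n k : ℕ) (hk : 1 ≤ k) (hkn : 2 * k < n) (γ : ℝ) (hγ : 0 < γ)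
    (w1 w2 : JV n k) (hw : w1 ≠ w2) :
    ¬ ∃ v ∈ Hinv w1 w2, v ≠ 0 ∧
        (JH n k w1 w2 γ).mulVec v = (-(γ * ((k : ℝ) * ((n : ℝ) - (k : ℝ))))) • v := by
  rintro ⟨v, hinv, hv0, heq⟩
  classical
  set φ : ℝ := (k : ℝ) * ((n : ℝ) - (k : ℝ)) with hφ
  have hkn' : k ≤ n := by omega
  have hdegR : ∀ u : JV n k, (((JohnsonGraph n k).neighborFinset u).card : ℝ) = φ := by
    intro u
    rw [johnson_degree u, Nat.cast_mul, Nat.cast_sub hkn']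
  have hpt : ∀ u, γ * (φ * v u - (JA n k).mulVec v u)
      = (Pi.single w1 (1:ℝ) : JV n k → ℝ) u * v w1 + (Pi.single w2 (1:ℝ) : JV n k → ℝ) u * v w2 := by
    intro u
    have h := congrFun heq u
    simp only [JH, Matrix.sub_mulVec, Matrix.smul_mulVec, vecMulVec_mulVec',
      single_dotProduct, one_mul, Pi.sub_apply, Pi.smul_apply, smul_eq_mul] at h
    nlinarith [h]
  have hsym : ∀ u w, JA n k u w = JA n k w u := fun u w => by
    simp [JA, SimpleGraph.adjMatrix_apply, SimpleGraph.adj_comm]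
  have hcolsum : ∀ w : JV n k, ∑ u, JA n k u w = φ := by
    intro w
    calc ∑ u, JA n k u w = ∑ u, JA n k w u :=
          Finset.sum_congr rfl (fun u _ => hsym u w)
      _ = (JA n k).mulVec (fun _ => 1) w := by
          simp [Matrix.mulVec, dotProduct]
      _ = φ := by
          rw [JA, SimpleGraph.adjMatrix_mulVec_apply]
          simp only [Finset.sum_const, nsmul_eq_mul, mul_one]
          exact hdegR w
  have hsum : ∑ u, ((JA n k).mulVec v u) = φ * ∑ u, v u := by
    calc ∑ u, (JA n k).mulVec v u = ∑ u, ∑ w, JA n k u w * v w := by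
          simp [Matrix.mulVec, dotProduct]
      _ = ∑ w, (∑ u, JA n k u w) * v w := by
          rw [Finset.sum_comm]
          simp [Finset.sum_mul]
      _ = ∑ w, φ * v w := by
          refine Finset.sum_congr rfl fun w _ => ?_
          rw [hcolsum]
      _ = φ * ∑ u, v u := by rw [Finset.mul_sum]
  have hsingle : ∀ (w : JV n k) (c : ℝ), ∑ u, (Pi.single w (1:ℝ) : JV n k → ℝ) u * c = c := by
    intro w c
    rw [← Finset.sum_mul, Finset.sum_pi_single']
    simp
  have h12 : v w1 + v w2 = 0 := by
    have hs := Finset.sum_congr rfl (fun u (_ : u ∈ Finset.univ) => hpt u)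
    rw [Finset.sum_add_distrib, hsingle w1 (v w1), hsingle w2 (v w2)] at hs
    have hz : ∑ u, γ * (φ * v u - (JA n k).mulVec v u) = 0 := by
      rw [← Finset.mul_sum, Finset.sum_sub_distrib, ← Finset.mul_sum, hsum, sub_self, mul_zero]
    linarith [hs, hz]
  have hvv : v w2 = v w1 := by
    obtain ⟨g, hg1, hg2⟩ := exists_swap_perm w1 w2
    have hfix : fixesW w1 w2 g := by
      unfold fixesW
      rw [hg1, hg2, Finset.pair_comm]
    have := hinv g hfix w1
    rw [hg1] at this
    exact this
  have hw1 : v w1 = 0 := by linarith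
  have hw2 : v w2 = 0 := by linarith
  have heig : ∀ u, (JA n k).mulVec v u = φ * v u := by
    intro u
    have h := hpt u
    rw [hw1, hw2, mul_zero, mul_zero, add_zero] at h
    have := mul_eq_zero.1 h
    rcases this with h' | h'
    · exact absurd h' (ne_of_gt hγ)
    · linarith [sub_eq_zero.1 h']
  haveI : Nonempty (JV n k) := by
    obtain ⟨t, _, ht⟩ := Finset.exists_subset_card_eq
      (show k ≤ (Finset.univ : Finset (Fin n)).card by
        rw [Finset.card_univ, Fintype.card_fin]; exact hkn')
    exact ⟨⟨t, ht⟩⟩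
  obtain ⟨u0, hu0⟩ := Finite.exists_max v
  have hnsum : ∀ u : JV n k, ∑ x ∈ (JohnsonGraph n k).neighborFinset u, v x
      = (JA n k).mulVec v u := by
    intro u
    rw [JA, SimpleGraph.adjMatrix_mulVec_apply]
  have step : ∀ u w, v u = v u0 → (JohnsonGraph n k).Adj u w → v w = v u0 := by
    intro u w hu hadj
    have h1 : ∑ x ∈ (JohnsonGraph n k).neighborFinset u, (v u0 - v x) = 0 := by
      rw [Finset.sum_sub_distrib, Finset.sum_const, nsmul_eq_mul, hdegR, hnsum, heig, hu,
        sub_self]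
    have h2 := (Finset.sum_eq_zero_iff_of_nonneg
      (fun x _ => sub_nonneg.2 (hu0 x))).1 h1 w (((JohnsonGraph n k).mem_neighborFinset u w).2 hadj)
    linarith [sub_eq_zero.1 h2]
  have key : ∀ (a b : JV n k), (JohnsonGraph n k).Walk a b → v a = v u0 → v b = v u0 := by
    intro a b p
    induction p with
    | nil => exact id
    | cons h p ih => intro ha; exact ih (step _ _ ha h)
  have hall : ∀ t, v t = v u0 := fun t =>
    (johnson_reachable u0 t).elim fun p => key _ _ p rfl
  have hu00 : v u0 = 0 := by rw [← hall w1]; exact hw1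
  apply hv0
  funext t
  rw [Pi.zero_apply, hall t, hu00]
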